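/- arXiv:1310.1199 — 2 statements merged into one kernel-verified Lean document; each statement's English description precedes it below -/
import Mathlib

section
/- Let X and Y be positive, independent random variables, both essentially unbounded, and let h : [0,∞) → [0,∞) be continuous with h(x) → ∞ as x → ∞. If h(ab) ≤ h(a) + h(b) for all a, b > 0, then I_h(XY) = min(I_h(X), I_h(Y)), where I_h(Z) := liminf_{x→∞} (-log P(Z > x))/h(x). -/
/-!
Since `P(XY > x) ≥ P(X > x) P(Y > 1)` and `P(Y > 1) > 0`, `I_h(XY) ≤ I_h(X)`, and likewise for `Y`.
Conversely, let `0 ≤ s < min (I_h X) (I_h Y)`. A tail bound `P(Z > t) ≤ exp (-s' h t)` with `s < s'`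
transfers to `h(Z)` through the first point where the continuous `h` reaches a given level, so
`E[exp (s h Z)] < ∞` for `Z = X, Y`. Submultiplicativity gives `h x ≤ h z + sup_{(0,1]} h` for
`x ≤ z`, so on `{XY > x}` we have `h x - sup_{(0,1]} h ≤ h X + h Y`; Chernoff's bound and
independence then give `P(XY > x) ≤ B exp (-s h x)`, i.e. `I_h(XY) ≥ s`.
-/

open MeasureTheory ProbabilityTheory Filter Set Real Topology

/-- The `h`-order `I_h(Z)`. Since `log 0 = 0`, a vanishing tail contributes `0` rather than `+∞`,
which is why lower bounds on `tailRate` need the tail to be eventually positive. -/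
noncomputable def tailRate {Ω : Type*} [MeasurableSpace Ω] (μ : Measure Ω) (h : ℝ → ℝ)
    (Z : Ω → ℝ) : EReal :=
  liminf (fun x : ℝ => ((-log (μ.real {ω | Z ω > x}) / h x : ℝ) : EReal)) atTop

section TailRate

variable {Ω : Type*} [MeasurableSpace Ω] {μ : Measure Ω} {h : ℝ → ℝ} {Z W : Ω → ℝ} {s : ℝ}

lemma zero_le_tailRate [IsProbabilityMeasure μ] (hh : ∀ᶠ x in atTop, 0 ≤ h x) :
    0 ≤ tailRate μ h Z := by
  refine le_liminf_of_le (by isBoundedDefault) ?_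
  filter_upwards [hh] with x hx
  have : 0 ≤ -log (μ.real {ω | Z ω > x}) / h x :=
    div_nonneg (neg_nonneg.2 (log_nonpos measureReal_nonneg measureReal_le_one)) hx
  exact_mod_cast this

lemma tail_le_exp_of_lt_tailRate (hh : ∀ᶠ x in atTop, 0 < h x)
    (hs : (s : EReal) < tailRate μ h Z) :
    ∀ᶠ x in atTop, μ.real {ω | Z ω > x} ≤ exp (-s * h x) := by
  filter_upwards [eventually_lt_of_lt_liminf hs, hh] with x hx hhx
  have hlt : s < -log (μ.real {ω | Z ω > x}) / h x := by exact_mod_cast hx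
  rw [lt_div_iff₀ hhx] at hlt
  rcases measureReal_nonneg.eq_or_lt with hzero | hpos
  · rw [← hzero]; positivity
  · calc μ.real {ω | Z ω > x} = exp (log (μ.real {ω | Z ω > x})) := (exp_log hpos).symm
      _ ≤ exp (-s * h x) := exp_le_exp.2 (by linarith)

lemma le_tailRate_of_tail_le (hh : Tendsto h atTop atTop) {B : ℝ} (hB : 0 < B)
    (hpos : ∀ᶠ x in atTop, 0 < μ.real {ω | Z ω > x})
    (hle : ∀ᶠ x in atTop, μ.real {ω | Z ω > x} ≤ B * exp (-s * h x)) :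
    (s : EReal) ≤ tailRate μ h Z := by
  have hlim : Tendsto (fun x => s - log B / h x) atTop (𝓝 s) := by
    simpa using tendsto_const_nhds.sub (tendsto_const_nhds.div_atTop hh)
  calc (s : EReal) = liminf (fun x => ((s - log B / h x : ℝ) : EReal)) atTop :=
        ((continuous_coe_real_ereal.tendsto s).comp hlim).liminf_eq.symm
    _ ≤ tailRate μ h Z := by
      refine liminf_le_liminf ?_
      filter_upwards [hpos, hle, hh.eventually_gt_atTop 0] with x hpx hlex hhx
      have hlog : log (μ.real {ω | Z ω > x}) ≤ log B - s * h x := by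
        calc log (μ.real {ω | Z ω > x}) ≤ log (B * exp (-s * h x)) := log_le_log hpx hlex
          _ = log B - s * h x := by rw [log_mul hB.ne' (exp_pos _).ne', log_exp]; ring
      have : s - log B / h x ≤ -log (μ.real {ω | Z ω > x}) / h x := by
        rw [sub_le_iff_le_add, ← add_div, le_div_iff₀ hhx]
        linarith
      exact_mod_cast this

lemma tailRate_le_of_mul_le (hh : Tendsto h atTop atTop) {κ : ℝ} (hκ : 0 < κ)
    (hpos : ∀ᶠ x in atTop, 0 < μ.real {ω | W ω > x})
    (hle : ∀ᶠ x in atTop, κ * μ.real {ω | W ω > x} ≤ μ.real {ω | Z ω > x}) :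
    tailRate μ h Z ≤ tailRate μ h W := by
  refine EReal.ge_of_forall_gt_iff_ge.1 fun s hs =>
    le_tailRate_of_tail_le hh (inv_pos.2 hκ) hpos ?_
  filter_upwards [hle, tail_le_exp_of_lt_tailRate (hh.eventually_gt_atTop 0) hs] with x hx hZx
  rw [inv_mul_eq_div, le_div_iff₀' hκ]
  exact hx.trans hZx

end TailRate

lemma map_le_map_add_of_le {h : ℝ → ℝ} (hsub : ∀ a > (0 : ℝ), ∀ b > (0 : ℝ), h (a * b) ≤ h a + h b)
    {v : ℝ} (hv : ∀ t ∈ Ioc (0 : ℝ) 1, h t ≤ v) {x z : ℝ} (hx : 0 < x) (hxz : x ≤ z) :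
    h x ≤ h z + v := by
  have hz : 0 < z := hx.trans_le hxz
  calc h x = h (z * (x / z)) := by rw [mul_div_cancel₀ x hz.ne']
    _ ≤ h z + h (x / z) := hsub z hz (x / z) (div_pos hx hz)
    _ ≤ h z + v := by gcongr; exact hv _ ⟨div_pos hx hz, (div_le_one hz).2 hxz⟩

section ExponentialTails

variable {Ω : Type*} [MeasurableSpace Ω] {μ : Measure Ω} {h : ℝ → ℝ} {Z : Ω → ℝ} {s : ℝ}

lemma integrable_exp_mul_of_measureReal_le [IsFiniteMeasure μ] {f : Ω → ℝ} (hf : Measurable f)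
    (hf0 : ∀ ω, 0 ≤ f ω) {s s' A : ℝ} (hs : 0 ≤ s) (hss' : s < s')
    (htail : ∀ u, μ.real {ω | u ≤ f ω} ≤ A * exp (-s' * u)) :
    Integrable (fun ω => exp (s * f ω)) μ := by
  have hA : 0 ≤ A := by simpa using measureReal_nonneg.trans (htail 0)
  have hlevel : ∀ k : ℕ, MeasurableSet {ω | (k : ℝ) ≤ f ω} :=
    fun k => measurableSet_le measurable_const hf
  set r := exp (-(s' - s))
  have hr : r < 1 := exp_lt_one_iff.2 (by linarith)
  have hsum : Summable fun k : ℕ => A * exp s * r ^ k :=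
    (summable_geometric_of_lt_one (exp_pos _).le hr).mul_left _
  refine ⟨(hf.const_mul s).exp.aestronglyMeasurable, ?_⟩
  rw [hasFiniteIntegral_iff_ofReal (Eventually.of_forall fun ω => (exp_pos _).le)]
  calc ∫⁻ ω, ENNReal.ofReal (exp (s * f ω)) ∂μ
      ≤ ∫⁻ ω, ∑' k : ℕ, {ω | (k : ℝ) ≤ f ω}.indicator
          (fun _ => ENNReal.ofReal (exp (s * (k + 1)))) ω ∂μ := by
        refine lintegral_mono fun ω => le_trans ?_ (ENNReal.le_tsum ⌊f ω⌋₊)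
        rw [indicator_of_mem (show ω ∈ {ω' | (⌊f ω⌋₊ : ℝ) ≤ f ω'} from Nat.floor_le (hf0 ω))]
        exact ENNReal.ofReal_le_ofReal
          (exp_le_exp.2 (mul_le_mul_of_nonneg_left (Nat.lt_floor_add_one _).le hs))
    _ = ∑' k : ℕ, ENNReal.ofReal (exp (s * (k + 1))) * μ {ω | (k : ℝ) ≤ f ω} := by
        rw [lintegral_tsum fun k => (measurable_const.indicator (hlevel k)).aemeasurable]
        simp_rw [lintegral_indicator_const (hlevel _)]
    _ ≤ ∑' k : ℕ, ENNReal.ofReal (A * exp s * r ^ k) := by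
        refine ENNReal.tsum_le_tsum fun k => ?_
        rw [← ofReal_measureReal, ← ENNReal.ofReal_mul (exp_pos _).le]
        refine ENNReal.ofReal_le_ofReal ?_
        calc exp (s * (k + 1)) * μ.real {ω | (k : ℝ) ≤ f ω}
            ≤ exp (s * (k + 1)) * (A * exp (-s' * k)) := by gcongr; exact htail k
          _ = A * exp s * r ^ k := by
            rw [← exp_nat_mul, mul_assoc, ← exp_add, mul_left_comm, ← exp_add]
            ring_nf
    _ = ENNReal.ofReal (∑' k : ℕ, A * exp s * r ^ k) :=
        (ENNReal.ofReal_tsum_of_nonneg (fun k => by positivity) hsum).symm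
    _ < ⊤ := ENNReal.ofReal_lt_top

lemma measureReal_ge_le_exp_of_tail [IsFiniteMeasure μ] (hcont : ContinuousOn h (Ici 0))
    {T a : ℝ} (hT : 0 ≤ T) (hTa : T < a) (htail : ∀ t ≥ T, μ.real {ω | Z ω > t} ≤ exp (-s * h t)) :
    μ.real {ω | a ≤ Z ω} ≤ exp (-s * h a) := by
  -- `{a ≤ Z} ⊆ {Z > t}` for every `t < a`; let `t` increase to `a`.
  have hne : (𝓝[Ico T a] a).NeBot := by
    rw [← mem_closure_iff_nhdsWithin_neBot, closure_Ico hTa.ne]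
    exact right_mem_Icc.2 hTa.le
  have hlim : Tendsto (fun t => exp (-s * h t)) (𝓝[Ico T a] a) (𝓝 (exp (-s * h a))) :=
    (((hcont a (hT.trans hTa.le)).mono fun t ht => hT.trans ht.1).const_mul (-s)).rexp
  refine ge_of_tendsto hlim (eventually_mem_nhdsWithin.mono fun t ht => ?_)
  exact (measureReal_mono fun ω hω => ht.2.trans_le hω).trans (htail t ht.1)

variable [IsProbabilityMeasure μ]

lemma exists_measureReal_comp_ge_le_mul_exp (hcont : ContinuousOn h (Ici 0))
    (htop : Tendsto h atTop atTop) (hZ : ∀ ω, 0 ≤ Z ω) (hs : 0 ≤ s)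
    (htail : ∀ᶠ t in atTop, μ.real {ω | Z ω > t} ≤ exp (-s * h t)) :
    ∃ A, ∀ u, μ.real {ω | u ≤ h (Z ω)} ≤ A * exp (-s * u) := by
  obtain ⟨T, hT⟩ := eventually_atTop.1 (htail.and (eventually_ge_atTop 0))
  have hT0 : 0 ≤ T := (hT T le_rfl).2
  obtain ⟨v, hv⟩ := isCompact_Icc.bddAbove_image (hcont.mono (Icc_subset_Ici_self : Icc 0 T ⊆ _))
  refine ⟨exp (s * max v 0), fun u => ?_⟩
  rcases le_or_gt u (max v 0) with hu | hu
  · calc μ.real {ω | u ≤ h (Z ω)} ≤ 1 := measureReal_le_one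
      _ ≤ exp (s * max v 0) * exp (-s * u) := by
        rw [← exp_add]; exact one_le_exp (by nlinarith)
  set S := Ici 0 ∩ h ⁻¹' Ici u
  have hS : IsClosed S := hcont.preimage_isClosed_of_isClosed isClosed_Ici isClosed_Ici
  have hSne : S.Nonempty :=
    ((eventually_ge_atTop 0).and (htop.eventually_ge_atTop u)).exists
  have hSbdd : BddBelow S := ⟨0, fun t ht => ht.1⟩
  -- `sInf S` is the first point where `h` reaches `u`, so `{u ≤ h Z} ⊆ {sInf S ≤ Z}`.
  have haS : sInf S ∈ S := hS.csInf_mem hSne hSbdd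
  have hua : u ≤ h (sInf S) := haS.2
  have hTa : T < sInf S := by
    by_contra! hle
    linarith [hv (mem_image_of_mem h ⟨haS.1, hle⟩), le_max_left v 0]
  calc μ.real {ω | u ≤ h (Z ω)} ≤ μ.real {ω | sInf S ≤ Z ω} :=
        measureReal_mono fun ω hω => csInf_le hSbdd ⟨hZ ω, hω⟩
    _ ≤ exp (-s * h (sInf S)) :=
        measureReal_ge_le_exp_of_tail hcont hT0 hTa fun t ht => (hT t ht).1
    _ ≤ exp (s * max v 0) * exp (-s * u) := by
      have h1 : exp (-s * h (sInf S)) ≤ exp (-s * u) := exp_le_exp.2 (by nlinarith)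
      have h2 : 1 ≤ exp (s * max v 0) := one_le_exp (by positivity)
      nlinarith [exp_pos (-s * u)]

lemma integrable_exp_mul_comp_of_lt_tailRate (hnn : ∀ x ≥ (0 : ℝ), 0 ≤ h x)
    (hcont : ContinuousOn h (Ici 0)) (htop : Tendsto h atTop atTop) (hZ : ∀ ω, 0 ≤ Z ω)
    (hhZ : Measurable fun ω => h (Z ω)) (hs : 0 ≤ s) (hsZ : (s : EReal) < tailRate μ h Z) :
    Integrable (fun ω => exp (s * h (Z ω))) μ := by
  obtain ⟨s', hss', hs'Z⟩ := EReal.exists_between_coe_real hsZ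
  have hss'r : s < s' := by exact_mod_cast hss'
  obtain ⟨A, hA⟩ := exists_measureReal_comp_ge_le_mul_exp hcont htop hZ (hs.trans hss'r.le)
    (tail_le_exp_of_lt_tailRate (htop.eventually_gt_atTop 0) hs'Z)
  exact integrable_exp_mul_of_measureReal_le hhZ (fun ω => hnn _ (hZ ω)) hs hss'r hA

end ExponentialTails

section Product

variable {Ω : Type*} [MeasurableSpace Ω] {μ : Measure Ω} {X Y : Ω → ℝ}

lemma measureReal_gt_mul_measureReal_gt_le [IsFiniteMeasure μ] (hind : IndepFun X Y μ)
    {a b : ℝ} (ha : 0 ≤ a) (hb : 0 ≤ b) :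
    μ.real {ω | X ω > a} * μ.real {ω | Y ω > b} ≤ μ.real {ω | X ω * Y ω > a * b} := by
  calc μ.real {ω | X ω > a} * μ.real {ω | Y ω > b}
      = μ.real ({ω | X ω > a} ∩ {ω | Y ω > b}) := by
        simp only [Measure.real, ← ENNReal.toReal_mul]
        exact congrArg _ (hind.measure_inter_preimage_eq_mul _ _ measurableSet_Ioi
          measurableSet_Ioi).symm
    _ ≤ μ.real {ω | X ω * Y ω > a * b} :=
        measureReal_mono fun ω hω => mul_lt_mul'' hω.1 hω.2 ha hb

lemma le_tailRate_mul [IsProbabilityMeasure μ] (hXpos : ∀ ω, 0 < X ω) (hYpos : ∀ ω, 0 < Y ω)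
    (hXm : Measurable X) (hYm : Measurable Y) (hind : IndepFun X Y μ) {h : ℝ → ℝ}
    (hnn : ∀ x ≥ (0 : ℝ), 0 ≤ h x) (hcont : ContinuousOn h (Ici 0))
    (htop : Tendsto h atTop atTop) (hsub : ∀ a > (0 : ℝ), ∀ b > (0 : ℝ), h (a * b) ≤ h a + h b)
    {s : ℝ} (hs : 0 ≤ s) (hsX : (s : EReal) < tailRate μ h X)
    (hsY : (s : EReal) < tailRate μ h Y)
    (hpos : ∀ᶠ x in atTop, 0 < μ.real {ω | X ω * Y ω > x}) :
    (s : EReal) ≤ tailRate μ h (fun ω => X ω * Y ω) := by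
  have hext : Continuous fun t => h (max t 0) :=
    hcont.comp_continuous (by fun_prop) fun t => le_max_right t 0
  have hcomp : ∀ Z : Ω → ℝ, (∀ ω, 0 < Z ω) → (fun ω => h (Z ω)) = (fun t => h (max t 0)) ∘ Z :=
    fun Z hZ => funext fun ω => by simp [max_eq_left (hZ ω).le]
  have hindh : IndepFun (fun ω => h (X ω)) (fun ω => h (Y ω)) μ := by
    rw [hcomp X hXpos, hcomp Y hYpos]; exact hind.comp hext.measurable hext.measurable
  set X' := fun ω => h (X ω)
  set Y' := fun ω => h (Y ω)
  have hintX : Integrable (fun ω => exp (s * X' ω)) μ :=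
    integrable_exp_mul_comp_of_lt_tailRate hnn hcont htop (fun ω => (hXpos ω).le)
      (by rw [hcomp X hXpos]; exact hext.measurable.comp hXm) hs hsX
  have hintY : Integrable (fun ω => exp (s * Y' ω)) μ :=
    integrable_exp_mul_comp_of_lt_tailRate hnn hcont htop (fun ω => (hYpos ω).le)
      (by rw [hcomp Y hYpos]; exact hext.measurable.comp hYm) hs hsY
  obtain ⟨v, hv⟩ :=
    isCompact_Icc.bddAbove_image (hcont.mono (Icc_subset_Ici_self : Icc (0 : ℝ) 1 ⊆ _))
  have hvle : ∀ t ∈ Ioc (0 : ℝ) 1, h t ≤ v :=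
    fun t ht => hv (mem_image_of_mem h (Ioc_subset_Icc_self ht))
  have hM : 0 < mgf X' μ s * mgf Y' μ s := mul_pos (mgf_pos hintX) (mgf_pos hintY)
  refine le_tailRate_of_tail_le htop (mul_pos (exp_pos (s * v)) hM) hpos ?_
  filter_upwards [eventually_gt_atTop 0] with x hx
  calc μ.real {ω | X ω * Y ω > x} ≤ μ.real {ω | h x - v ≤ (X' + Y') ω} :=
        measureReal_mono fun ω hω => by
          have := map_le_map_add_of_le hsub hvle hx hω.le
          have := hsub _ (hXpos ω) _ (hYpos ω)
          show h x - v ≤ h (X ω) + h (Y ω)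
          linarith
    _ ≤ exp (-s * (h x - v)) * mgf (X' + Y') μ s :=
        measure_ge_le_exp_mul_mgf _ hs (hindh.integrable_exp_mul_add hintX hintY)
    _ = exp (s * v) * (mgf X' μ s * mgf Y' μ s) * exp (-s * h x) := by
        rw [hindh.mgf_add hintX.aestronglyMeasurable hintY.aestronglyMeasurable,
          show -s * (h x - v) = s * v + -s * h x by ring, exp_add]
        ring

end Product

theorem stmt7 {Ω : Type*} [MeasurableSpace Ω] (μ : Measure Ω) [IsProbabilityMeasure μ]
    (X Y : Ω → ℝ) (hXpos : ∀ ω, 0 < X ω) (hYpos : ∀ ω, 0 < Y ω)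
    (hXub : ∀ a > (0 : ℝ), 0 < μ {ω | X ω > a})
    (hYub : ∀ a > (0 : ℝ), 0 < μ {ω | Y ω > a})
    (hXm : Measurable X) (hYm : Measurable Y)
    (hind : ProbabilityTheory.IndepFun X Y μ)
    (h : ℝ → ℝ) (hnn : ∀ x ≥ (0 : ℝ), 0 ≤ h x)
    (hcont : ContinuousOn h (Ici 0))
    (htop : Tendsto h atTop atTop)
    (hsub : ∀ a > (0 : ℝ), ∀ b > (0 : ℝ), h (a * b) ≤ h a + h b) :
    Filter.liminf
        (fun x : ℝ => ((-Real.log (μ {ω | X ω * Y ω > x}).toReal / h x : ℝ) : EReal)) atTop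
      = min
        (Filter.liminf
          (fun x : ℝ => ((-Real.log (μ {ω | X ω > x}).toReal / h x : ℝ) : EReal)) atTop)
        (Filter.liminf
          (fun x : ℝ => ((-Real.log (μ {ω | Y ω > x}).toReal / h x : ℝ) : EReal)) atTop) := by
  have hposX : ∀ a > (0 : ℝ), 0 < μ.real {ω | X ω > a} :=
    fun a ha => ENNReal.toReal_pos (hXub a ha).ne' (measure_ne_top _ _)
  have hposY : ∀ a > (0 : ℝ), 0 < μ.real {ω | Y ω > a} :=
    fun a ha => ENNReal.toReal_pos (hYub a ha).ne' (measure_ne_top _ _)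
  have hgeX : ∀ x ≥ (0 : ℝ), μ.real {ω | Y ω > 1} * μ.real {ω | X ω > x}
      ≤ μ.real {ω | X ω * Y ω > x} := fun x hx => by
    simpa [mul_comm] using measureReal_gt_mul_measureReal_gt_le hind hx zero_le_one
  have hgeY : ∀ x ≥ (0 : ℝ), μ.real {ω | X ω > 1} * μ.real {ω | Y ω > x}
      ≤ μ.real {ω | X ω * Y ω > x} := fun x hx => by
    simpa using measureReal_gt_mul_measureReal_gt_le hind zero_le_one hx
  have hposXY : ∀ᶠ x in atTop, 0 < μ.real {ω | X ω * Y ω > x} :=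
    (eventually_gt_atTop 0).mono fun x hx =>
      (mul_pos (hposY 1 one_pos) (hposX x hx)).trans_le (hgeX x hx.le)
  change tailRate μ h (fun ω => X ω * Y ω) = min (tailRate μ h X) (tailRate μ h Y)
  refine le_antisymm (le_min ?_ ?_) (EReal.ge_of_forall_gt_iff_ge.1 fun s hs => ?_)
  · exact tailRate_le_of_mul_le htop (hposY 1 one_pos) ((eventually_gt_atTop 0).mono hposX)
      ((eventually_ge_atTop 0).mono hgeX)
  · exact tailRate_le_of_mul_le htop (hposX 1 one_pos) ((eventually_gt_atTop 0).mono hposY)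
      ((eventually_ge_atTop 0).mono hgeY)
  rcases le_or_gt s 0 with hs0 | hs0
  · exact (EReal.coe_nonpos.2 hs0).trans (zero_le_tailRate (htop.eventually_ge_atTop 0))
  · exact le_tailRate_mul hXpos hYpos hXm hYm hind hnn hcont htop hsub hs0.le
      (hs.trans_le (min_le_left _ _)) (hs.trans_le (min_le_right _ _)) hposXY
end

section
/- Let h_1, h_2 : [0,∞) → [0,∞) be continuous strictly increasing functions with h_2(x) < h_1(x) for all x ≥ 0 and h_2(x) → ∞ as x → ∞. Define x_0 = 1 and x_{n+1} = h_2^{-1}(h_1(x_n)). Then the x_n tend to ∞, the values p_n = exp(-h_2(x_n)) - exp(-h_1(x_n)) are nonnegative and sum (together with possible mass elsewhere) to at most 1 in such a way that there exists a discrete random variable X with P(X = x_n) = c·p_n for a normalizing constant, whose hazard function R satisfies limsup_{x→∞} R(x)/h_1(x) = 1 and liminf_{x→∞} R(x)/h_2(x) = 1. -/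
/-!
Since `h₂ (x (n + 1)) = h₁ (x n) > h₂ (x n)`, the `x n` increase, and a finite limit `l` would
give `h₂ l = h₁ l`. With `E n = exp (-h₂ (x n))`, put mass `E n - E (n + 1)` at `x n` and the
remaining `1 - E 0` to the left of `x 0`. The tail on `[x n, x (n + 1))` is then `E (n + 1)`, so
`R = h₂ (x (n + 1)) = h₁ (x n)` there. Hence `R / h₁ ≤ 1`, with equality at the left endpoints,
while `R / h₂ ≥ 1` and, by continuity of `h₂`, tends to `1` at the right endpoints.
-/

open MeasureTheory Filter Set Topology

theorem EReal.limsup_coe_eq_of_eventually_le_of_frequently_ge {α : Type*} {l : Filter α}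
    {u : α → ℝ} {a : ℝ} (hle : ∀ᶠ t in l, u t ≤ a) (hge : ∃ᶠ t in l, a ≤ u t) :
    limsup (fun t => (u t : EReal)) l = a :=
  le_antisymm (limsup_le_of_le (by isBoundedDefault) (hle.mono fun _ => EReal.coe_le_coe))
    (le_limsup_of_frequently_le (hge.mono fun _ => EReal.coe_le_coe) (by isBoundedDefault))

theorem EReal.liminf_coe_eq_of_eventually_ge_of_frequently_le {α : Type*} {l : Filter α}
    {u : α → ℝ} {a : ℝ} (hge : ∀ᶠ t in l, a ≤ u t) (hle : ∀ c > a, ∃ᶠ t in l, u t ≤ c) :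
    liminf (fun t => (u t : EReal)) l = a := by
  refine le_antisymm (EReal.le_of_forall_lt_iff_le.1 fun c hc => ?_)
    (le_liminf_of_le (by isBoundedDefault) (hge.mono fun _ => EReal.coe_le_coe))
  exact liminf_le_of_frequently_le'
    ((hle c (EReal.coe_lt_coe_iff.1 hc)).mono fun _ => EReal.coe_le_coe)

theorem exists_mem_Ico_of_tendsto_atTop {x : ℕ → ℝ} (hx : Tendsto x atTop atTop) {t : ℝ}
    (ht : x 0 ≤ t) : ∃ n, t ∈ Ico (x n) (x (n + 1)) := by
  classical
  have hex : ∃ n, t < x n := (hx.eventually_gt_atTop t).exists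
  obtain ⟨n, hn⟩ : ∃ n, Nat.find hex = n + 1 :=
    Nat.exists_eq_succ_of_ne_zero fun h => (Nat.find_spec hex).not_ge (h ▸ ht)
  exact ⟨n, not_lt.1 (Nat.find_min hex (by omega)), hn ▸ Nat.find_spec hex⟩

theorem strictMono_of_apply_succ_eq {S : Set ℝ} {f g : ℝ → ℝ} {x : ℕ → ℝ}
    (hf : StrictMonoOn f S) (hfg : ∀ y ∈ S, f y < g y) (hxS : ∀ n, x n ∈ S)
    (hrec : ∀ n, f (x (n + 1)) = g (x n)) : StrictMono x :=
  strictMono_nat_of_lt_succ fun n =>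
    (hf.lt_iff_lt (hxS n) (hxS (n + 1))).1 ((hrec n).symm ▸ hfg _ (hxS n))

theorem tendsto_atTop_of_apply_succ_eq {S : Set ℝ} {f g : ℝ → ℝ} {x : ℕ → ℝ} (hS : IsClosed S)
    (hf : ContinuousOn f S) (hg : ContinuousOn g S) (hfg : ∀ y ∈ S, f y ≠ g y)
    (hx : Monotone x) (hxS : ∀ n, x n ∈ S) (hrec : ∀ n, f (x (n + 1)) = g (x n)) :
    Tendsto x atTop atTop := by
  refine (tendsto_atTop_of_monotone hx).resolve_right fun ⟨l, hl⟩ => ?_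
  have hlS : l ∈ S := hS.mem_of_tendsto hl (Eventually.of_forall hxS)
  have hxl : Tendsto x atTop (𝓝[S] l) := tendsto_nhdsWithin_iff.2 ⟨hl, Eventually.of_forall hxS⟩
  have hf_lim : Tendsto (fun n => f (x (n + 1))) atTop (𝓝 (f l)) :=
    ((hf l hlS).tendsto.comp hxl).comp (tendsto_add_atTop_nat 1)
  have hg_lim : Tendsto (fun n => g (x n)) atTop (𝓝 (g l)) := (hg l hlS).tendsto.comp hxl
  exact hfg l hlS (tendsto_nhds_unique (by simpa only [hrec] using hf_lim) hg_lim)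

section Telescoping

variable {E : ℕ → ℝ}

theorem hasSum_sub_succ_of_tendsto (hE : Antitone E) (hlim : Tendsto E atTop (𝓝 0)) :
    HasSum (fun n => E n - E (n + 1)) (E 0) := by
  refine (hasSum_iff_tendsto_nat_of_nonneg (fun n => sub_nonneg.2 (hE n.le_succ)) _).2 ?_
  simpa only [Finset.sum_range_sub', sub_zero] using tendsto_const_nhds.sub hlim

theorem tsum_ofReal_sub_succ_add (hE : Antitone E) (hlim : Tendsto E atTop (𝓝 0)) (N : ℕ) :
    ∑' n, ENNReal.ofReal (E (n + N) - E (n + N + 1)) = ENNReal.ofReal (E N) := by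
  have hEN : Antitone fun n => E (n + N) := fun m n h => hE (by omega)
  have hsum := hasSum_sub_succ_of_tendsto hEN (hlim.comp (tendsto_add_atTop_nat N))
  simp only [zero_add, add_right_comm _ 1 N] at hsum
  rw [← ENNReal.ofReal_tsum_of_nonneg (fun n => sub_nonneg.2 (hE (by omega))) hsum.summable,
    hsum.tsum_eq]

variable {x : ℕ → ℝ}

noncomputable def telescopingMeasure (x E : ℕ → ℝ) : Measure ℝ :=
  Measure.sum fun n => ENNReal.ofReal (E n - E (n + 1)) • Measure.dirac (x n)

theorem telescopingMeasure_apply {s : Set ℝ} (hs : MeasurableSet s) :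
    telescopingMeasure x E s = ∑' n, ENNReal.ofReal (E n - E (n + 1)) * s.indicator 1 (x n) := by
  simp only [telescopingMeasure, Measure.sum_apply _ hs, Measure.smul_apply,
    Measure.dirac_apply' _ hs, smul_eq_mul]

theorem telescopingMeasure_univ (hE : Antitone E) (hlim : Tendsto E atTop (𝓝 0)) :
    telescopingMeasure x E univ = ENNReal.ofReal (E 0) := by
  simpa [telescopingMeasure_apply MeasurableSet.univ] using tsum_ofReal_sub_succ_add hE hlim 0

theorem telescopingMeasure_singleton (hx : Function.Injective x) (n : ℕ) :
    telescopingMeasure x E {x n} = ENNReal.ofReal (E n - E (n + 1)) := by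
  rw [telescopingMeasure_apply (measurableSet_singleton _), tsum_eq_single n fun m hm => ?_]
  · simp
  · simp [hx.ne hm]

theorem telescopingMeasure_Ioi (hE : Antitone E) (hlim : Tendsto E atTop (𝓝 0))
    (hx : Monotone x) {n : ℕ} {t : ℝ} (ht : t ∈ Ico (x n) (x (n + 1))) :
    telescopingMeasure x E (Ioi t) = ENNReal.ofReal (E (n + 1)) := by
  rw [telescopingMeasure_apply measurableSet_Ioi,
    ← ENNReal.summable.sum_add_tsum_nat_add' (k := n + 1)]
  have hhead : ∀ m ∈ Finset.range (n + 1), x m ∉ Ioi t := fun m hm =>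
    not_lt.2 ((hx (Finset.mem_range_succ_iff.1 hm)).trans ht.1)
  have htail : ∀ m, x (m + (n + 1)) ∈ Ioi t := fun m => ht.2.trans_le (hx (by omega))
  rw [Finset.sum_eq_zero fun m hm => by rw [indicator_of_notMem (hhead m hm), mul_zero], zero_add]
  rw [← tsum_ofReal_sub_succ_add hE hlim (n + 1)]
  exact tsum_congr fun m => by rw [indicator_of_mem (htail m), Pi.one_apply, mul_one]

theorem exists_isProbabilityMeasure_singleton_Ioi (hx : StrictMono x) (hE : Antitone E)
    (hlim : Tendsto E atTop (𝓝 0)) (hE0 : E 0 ≤ 1) :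
    ∃ μ : Measure ℝ, IsProbabilityMeasure μ ∧
      (∀ n, μ {x n} = ENNReal.ofReal (E n - E (n + 1))) ∧
      ∀ n, ∀ t ∈ Ico (x n) (x (n + 1)), μ (Ioi t) = ENNReal.ofReal (E (n + 1)) := by
  set μ := telescopingMeasure x E + ENNReal.ofReal (1 - E 0) • Measure.dirac (x 0 - 1)
  have hleft : ∀ {s : Set ℝ}, MeasurableSet s → x 0 - 1 ∉ s → μ s = telescopingMeasure x E s :=
    fun hs h => by simp [μ, Measure.dirac_apply' _ hs, h]
  refine ⟨μ, ⟨?_⟩, fun n => ?_, fun n t ht => ?_⟩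
  · simp only [μ, Measure.add_apply, telescopingMeasure_univ hE hlim, Measure.smul_apply,
      measure_univ, smul_eq_mul, mul_one]
    rw [← ENNReal.ofReal_add (hE.le_of_tendsto hlim 0) (sub_nonneg.2 hE0)]
    simp
  · rw [hleft (measurableSet_singleton _), telescopingMeasure_singleton hx.injective]
    exact ((sub_one_lt (x 0)).trans_le (hx.monotone n.zero_le)).ne
  · rw [hleft measurableSet_Ioi, telescopingMeasure_Ioi hE hlim hx.monotone ht]
    simpa using ((sub_one_lt (x 0)).trans_le (hx.monotone n.zero_le)).le.trans ht.1

end Telescoping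

theorem exists_mem_Ico_le_mul_of_continuousOn {f : ℝ → ℝ} {a b c : ℝ} (hab : a ≤ b)
    (hf : ContinuousOn f (Icc a b)) (hfab : f a < f b) (hb : 0 < f b) (hc : 1 < c) :
    ∃ t ∈ Ico a b, f b ≤ c * f t := by
  obtain ⟨t, ht, hft⟩ :=
    intermediate_value_Ico hab hf ⟨le_max_left (f a) (f b / c), max_lt hfab (div_lt_self hb hc)⟩
  exact ⟨t, ht, hft ▸ (div_le_iff₀' (by linarith)).1 (le_max_right _ _)⟩

section StepRatio

variable {x : ℕ → ℝ} {h R : ℝ → ℝ}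

theorem limsup_div_eq_one_of_eq_left_endpoint (hx : StrictMono x) (hxtop : Tendsto x atTop atTop)
    (hmono : MonotoneOn h (Ici (x 0))) (hpos : ∀ᶠ t in atTop, 0 < h t)
    (hR : ∀ n, ∀ t ∈ Ico (x n) (x (n + 1)), R t = h (x n)) :
    limsup (fun t => ((R t / h t : ℝ) : EReal)) atTop = 1 := by
  refine EReal.limsup_coe_eq_of_eventually_le_of_frequently_ge ?_ ?_
  · filter_upwards [eventually_ge_atTop (x 0), hpos] with t ht0 ht
    obtain ⟨n, hn⟩ := exists_mem_Ico_of_tendsto_atTop hxtop ht0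
    rw [hR n t hn, div_le_one ht]
    exact hmono (hx.monotone n.zero_le) ht0 hn.1
  · refine hxtop.frequently ((hxtop.eventually hpos).frequently.mono fun n hn => ?_)
    rw [hR n (x n) ⟨le_rfl, hx n.lt_succ_self⟩, div_self hn.ne']

theorem liminf_div_eq_one_of_eq_right_endpoint (hx : StrictMono x) (hxtop : Tendsto x atTop atTop)
    (hcont : ContinuousOn h (Ici (x 0))) (hmono : StrictMonoOn h (Ici (x 0)))
    (hpos : ∀ᶠ t in atTop, 0 < h t)
    (hR : ∀ n, ∀ t ∈ Ico (x n) (x (n + 1)), R t = h (x (n + 1))) :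
    liminf (fun t => ((R t / h t : ℝ) : EReal)) atTop = 1 := by
  have hxI : ∀ n, x n ∈ Ici (x 0) := fun n => hx.monotone n.zero_le
  refine EReal.liminf_coe_eq_of_eventually_ge_of_frequently_le ?_ fun c hc => ?_
  · filter_upwards [eventually_ge_atTop (x 0), hpos] with t ht0 ht
    obtain ⟨n, hn⟩ := exists_mem_Ico_of_tendsto_atTop hxtop ht0
    rw [hR n t hn, one_le_div ht]
    exact hmono.monotoneOn ht0 (hxI _) hn.2.le
  refine frequently_atTop.2 fun a => ?_
  obtain ⟨n, han, hn⟩ := ((hxtop.eventually_ge_atTop a).and (hxtop.eventually hpos)).exists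
  have hlt : h (x n) < h (x (n + 1)) := hmono (hxI _) (hxI _) (hx n.lt_succ_self)
  obtain ⟨t, ht, hht⟩ := exists_mem_Ico_le_mul_of_continuousOn (hx n.lt_succ_self).le
    (hcont.mono fun s hs => (hxI n).trans hs.1) hlt (hn.trans hlt) hc
  have htpos : 0 < h t := hn.trans_le (hmono.monotoneOn (hxI n) ((hxI n).trans ht.1) ht.1)
  exact ⟨t, han.trans ht.1, by rwa [hR n t ht, div_le_iff₀ htpos]⟩

end StepRatio

theorem stmt18_general (h₁ h₂ : ℝ → ℝ)
    (h₁cont : ContinuousOn h₁ (Ici 0)) (h₂cont : ContinuousOn h₂ (Ici 0))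
    (h₁mono : StrictMonoOn h₁ (Ici 0)) (h₂mono : StrictMonoOn h₂ (Ici 0))
    (h₂nn : ∀ x ≥ (0 : ℝ), 0 ≤ h₂ x)
    (hlt : ∀ x ≥ (0 : ℝ), h₂ x < h₁ x)
    (h₂top : Tendsto h₂ atTop atTop)
    (x : ℕ → ℝ) (hx0 : x 0 = 1)
    (hxrec : ∀ n : ℕ, x (n + 1) ≥ 0 ∧ h₂ (x (n + 1)) = h₁ (x n)) :
    Tendsto x atTop atTop ∧
    (∀ n : ℕ, 0 ≤ Real.exp (-h₂ (x n)) - Real.exp (-h₁ (x n))) ∧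
    ∃ (μ : Measure ℝ) (_ : IsProbabilityMeasure μ) (c : ℝ), 0 < c ∧
      (∀ n : ℕ, μ {x n} =
        ENNReal.ofReal (c * (Real.exp (-h₂ (x n)) - Real.exp (-h₁ (x n))))) ∧
      Filter.limsup
        (fun t : ℝ => ((-Real.log (μ (Set.Ioi t)).toReal / h₁ t : ℝ) : EReal)) atTop = 1 ∧
      Filter.liminf
        (fun t : ℝ => ((-Real.log (μ (Set.Ioi t)).toReal / h₂ t : ℝ) : EReal)) atTop = 1 := by
  have hxI : ∀ n, x n ∈ Ici 0 := fun
    | 0 => by simp [hx0]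
    | n + 1 => (hxrec n).1
  have hrec : ∀ n, h₂ (x (n + 1)) = h₁ (x n) := fun n => (hxrec n).2
  have hx : StrictMono x := strictMono_of_apply_succ_eq h₂mono hlt hxI hrec
  have hxtop : Tendsto x atTop atTop := tendsto_atTop_of_apply_succ_eq isClosed_Ici h₂cont h₁cont
    (fun y hy => (hlt y hy).ne) hx.monotone hxI hrec
  have hmass : ∀ n, Real.exp (-h₂ (x n)) - Real.exp (-h₂ (x (n + 1))) =
      Real.exp (-h₂ (x n)) - Real.exp (-h₁ (x n)) := fun n => by rw [hrec]
  have hE : Antitone fun n => Real.exp (-h₂ (x n)) := fun m n hmn =>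
    Real.exp_le_exp.2 (neg_le_neg (h₂mono.monotoneOn (hxI m) (hxI n) (hx.monotone hmn)))
  obtain ⟨μ, hμ, hμx, hμIoi⟩ := exists_isProbabilityMeasure_singleton_Ioi hx hE
    (Real.tendsto_exp_atBot.comp (tendsto_neg_atTop_atBot.comp (h₂top.comp hxtop)))
    (Real.exp_le_one_iff.2 (neg_nonpos.2 (h₂nn _ (hxI 0))))
  have hR : ∀ n, ∀ t ∈ Ico (x n) (x (n + 1)), -Real.log (μ (Ioi t)).toReal = h₂ (x (n + 1)) :=
    fun n t ht => by
      rw [hμIoi n t ht, ENNReal.toReal_ofReal (Real.exp_pos _).le, Real.log_exp, neg_neg]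
  have hpos : ∀ᶠ t in atTop, 0 < h₂ t := h₂top.eventually_gt_atTop 0
  have hx0I : Ici (x 0) ⊆ Ici 0 := Ici_subset_Ici.2 (hxI 0)
  refine ⟨hxtop, fun n => ?_, μ, hμ, 1, one_pos, fun n => by rw [one_mul, hμx, hmass], ?_, ?_⟩
  · exact sub_nonneg.2 (Real.exp_le_exp.2 (neg_le_neg (hlt _ (hxI n)).le))
  · refine limsup_div_eq_one_of_eq_left_endpoint hx hxtop (h₁mono.monotoneOn.mono hx0I) ?_
      fun n t ht => ?_
    · filter_upwards [hpos, eventually_ge_atTop 0] with t ht ht0 using ht.trans (hlt t ht0)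
    · rw [hR n t ht, hrec]
  · exact liminf_div_eq_one_of_eq_right_endpoint hx hxtop (h₂cont.mono hx0I) (h₂mono.mono hx0I)
      hpos hR

theorem stmt18 (h₁ h₂ : ℝ → ℝ)
    (h₁cont : ContinuousOn h₁ (Ici 0)) (h₂cont : ContinuousOn h₂ (Ici 0))
    (h₁mono : StrictMonoOn h₁ (Ici 0)) (h₂mono : StrictMonoOn h₂ (Ici 0))
    (h₁nn : ∀ x ≥ (0 : ℝ), 0 ≤ h₁ x) (h₂nn : ∀ x ≥ (0 : ℝ), 0 ≤ h₂ x)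
    (hlt : ∀ x ≥ (0 : ℝ), h₂ x < h₁ x)
    (h₂top : Tendsto h₂ atTop atTop)
    (x : ℕ → ℝ) (hx0 : x 0 = 1)
    (hxrec : ∀ n : ℕ, x (n + 1) ≥ 0 ∧ h₂ (x (n + 1)) = h₁ (x n)) :
    Tendsto x atTop atTop ∧
    (∀ n : ℕ, 0 ≤ Real.exp (-h₂ (x n)) - Real.exp (-h₁ (x n))) ∧
    ∃ (μ : Measure ℝ) (_ : IsProbabilityMeasure μ) (c : ℝ), 0 < c ∧
      (∀ n : ℕ, μ {x n} =
        ENNReal.ofReal (c * (Real.exp (-h₂ (x n)) - Real.exp (-h₁ (x n))))) ∧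
      Filter.limsup
        (fun t : ℝ => ((-Real.log (μ (Set.Ioi t)).toReal / h₁ t : ℝ) : EReal)) atTop = 1 ∧
      Filter.liminf
        (fun t : ℝ => ((-Real.log (μ (Set.Ioi t)).toReal / h₂ t : ℝ) : EReal)) atTop = 1 :=
  stmt18_general h₁ h₂ h₁cont h₂cont h₁mono h₂mono h₂nn hlt h₂top x hx0 hxrec
end
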